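/- arXiv:1905.00068 — 2 statements merged into one kernel-verified Lean document; each statement's English description precedes it below -/
import Mathlib

section
/- Let E be a finite-dimensional real inner product space, let k ≥ 1 be a natural number, let θ be a real constant, and let f, h, ρ : E → ℝ be smooth with f(x) > 0 for all x. If for every x ∈ E one has θ = ρ(x)·f(x)² + f(x)·Δf(x) + (k−1)·‖∇f(x)‖² − f(x)·⟨∇h(x), ∇f(x)⟩, then the function v := f^k is a positive smooth function satisfying the drifting elliptic equation Δ_h v(x) + k·ρ(x)·v(x) − k·θ·v(x)^{1−2/k} = 0 for all x ∈ E. -/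
open scoped BigOperators
open Module

variable {E : Type*} [NormedAddCommGroup E] [InnerProductSpace ℝ E] [FiniteDimensional ℝ E]

/-- The Laplacian of `f : E → ℝ`: the trace of the second derivative, computed as the sum
of the diagonal entries of the second derivative in an orthonormal basis. -/
noncomputable def laplacian (f : E → ℝ) (x : E) : ℝ :=
  ∑ i, iteratedFDeriv ℝ 2 f x ![stdOrthonormalBasis ℝ E i, stdOrthonormalBasis ℝ E i]

/-- The drifting (Bakry–Émery) Laplacian `Δ_h f = Δ f − ⟨∇h, ∇f⟩`. -/
noncomputable def driftLaplacian (h f : E → ℝ) (x : E) : ℝ :=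
  laplacian f x - inner ℝ (gradient h x) (gradient f x)

/-- The Hessian of `f` at `x` as a bilinear form. -/
noncomputable def hess (f : E → ℝ) (x : E) (v w : E) : ℝ :=
  iteratedFDeriv ℝ 2 f x ![v, w]

lemma grad_inner (f : E → ℝ) (x v : E) :
    (inner ℝ (gradient f x) v : ℝ) = fderiv ℝ f x v :=
  InnerProductSpace.toDual_symm_apply

lemma norm_grad_sq (f : E → ℝ) (x : E) : ‖gradient f x‖^2 =
    ∑ i, fderiv ℝ f x (stdOrthonormalBasis ℝ E i) * fderiv ℝ f x (stdOrthonormalBasis ℝ E i) := by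
  rw [← real_inner_self_eq_norm_sq]
  rw [← (stdOrthonormalBasis ℝ E).sum_inner_mul_inner (gradient f x) (gradient f x)]
  congr 1; ext i
  rw [real_inner_comm (gradient f x) (stdOrthonormalBasis ℝ E i)]
  simp only [grad_inner]

theorem stmt_0 (k : ℕ) (hk : 1 ≤ k) (θ : ℝ) (f h ρ : E → ℝ)
    (hf : ContDiff ℝ (⊤ : ℕ∞) f) (hh : ContDiff ℝ (⊤ : ℕ∞) h) (hρ : ContDiff ℝ (⊤ : ℕ∞) ρ)
    (hfpos : ∀ x, 0 < f x)
    (heq : ∀ x, θ = ρ x * f x ^ 2 + f x * laplacian f x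
      + ((k : ℝ) - 1) * ‖gradient f x‖ ^ 2
      - f x * (inner ℝ (gradient h x) (gradient f x) : ℝ)) :
    (∀ x, 0 < f x ^ k) ∧ ContDiff ℝ (⊤ : ℕ∞) (fun x => f x ^ k) ∧
      ∀ x, driftLaplacian h (fun y => f y ^ k) x + (k : ℝ) * ρ x * f x ^ k
        - (k : ℝ) * θ * (f x ^ k) ^ ((1 : ℝ) - 2 / (k : ℝ)) = 0 := by
  have hkR : (k : ℝ) ≠ 0 := Nat.cast_ne_zero.mpr (by omega)
  refine ⟨fun x => pow_pos (hfpos x) k, hf.pow k, fun x => ?_⟩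
  have hF : f x ≠ 0 := (hfpos x).ne'
  -- derivative of f^k
  have hfd : ∀ y, HasFDerivAt (fun z => f z ^ k) (((k:ℝ) * f y ^ (k-1)) • fderiv ℝ f y) y :=
    fun y => (hasDerivAt_pow k (f y)).comp_hasFDerivAt y (hf.differentiable (by simp) y).hasFDerivAt
  have hfderiv : fderiv ℝ (fun z => f z ^ k) = fun y => ((k:ℝ) * f y ^ (k-1)) • fderiv ℝ f y :=
    funext fun y => (hfd y).fderiv
  -- gradient inner product term
  have hgrad : (inner ℝ (gradient h x) (gradient (fun y => f y ^ k) x) : ℝ)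
      = (k:ℝ) * f x ^ (k-1) * (inner ℝ (gradient h x) (gradient f x) : ℝ) := by
    rw [real_inner_comm, grad_inner, hfderiv]
    simp only [ContinuousLinearMap.smul_apply, smul_eq_mul]
    rw [← grad_inner, real_inner_comm]
  -- second derivative of f^k
  have hc : HasFDerivAt (fun y => (k:ℝ) * f y ^ (k-1))
      ((k:ℝ) • ((((k-1:ℕ)):ℝ) * f x ^ (k-1-1)) • fderiv ℝ f x) x :=
    ((hasDerivAt_pow (k-1) (f x)).comp_hasFDerivAt x
      (hf.differentiable (by simp) x).hasFDerivAt).const_mul (k:ℝ)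
  have hL : HasFDerivAt (fderiv ℝ f) (fderiv ℝ (fderiv ℝ f) x) x :=
    (((hf.fderiv_right (m := 1) (by exact WithTop.coe_le_coe.mpr le_top)).differentiable (by simp)) x).hasFDerivAt
  have hsm := hc.smul hL
  have hdd : fderiv ℝ (fderiv ℝ (fun z => f z ^ k)) x
      = ((k:ℝ) * f x ^ (k-1)) • fderiv ℝ (fderiv ℝ f) x
        + ((k:ℝ) • ((((k-1:ℕ)):ℝ) * f x ^ (k-1-1)) • fderiv ℝ f x).smulRight (fderiv ℝ f x) := by
    rw [hfderiv]; exact hsm.fderiv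
  have hhess : ∀ v w : E, iteratedFDeriv ℝ 2 (fun z => f z ^ k) x ![v, w]
      = (k:ℝ) * f x ^ (k-1) * (fderiv ℝ (fderiv ℝ f) x v w)
        + (k:ℝ) * (((k-1:ℕ)):ℝ) * f x ^ (k-1-1) * (fderiv ℝ f x v) * (fderiv ℝ f x w) := by
    intro v w
    rw [iteratedFDeriv_two_apply, hdd]
    simp only [ContinuousLinearMap.add_apply, ContinuousLinearMap.smul_apply,
      ContinuousLinearMap.smulRight_apply, smul_eq_mul, Matrix.cons_val_zero,
      Matrix.cons_val_one, Matrix.head_cons]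
    ring
  -- laplacian of f^k
  have hlapf : (∑ i, iteratedFDeriv ℝ 2 f x ![stdOrthonormalBasis ℝ E i, stdOrthonormalBasis ℝ E i])
      = ∑ i, fderiv ℝ (fderiv ℝ f) x (stdOrthonormalBasis ℝ E i) (stdOrthonormalBasis ℝ E i) := by
    apply Finset.sum_congr rfl
    intro i _
    rw [iteratedFDeriv_two_apply]
    simp
  have hlap : laplacian (fun z => f z ^ k) x
      = (k:ℝ) * f x ^ (k-1) * laplacian f x
        + (k:ℝ) * (((k-1:ℕ)):ℝ) * f x ^ (k-1-1) * ‖gradient f x‖^2 := by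
    unfold laplacian
    simp only [hhess]
    rw [Finset.sum_add_distrib, ← Finset.mul_sum, hlapf, norm_grad_sq, Finset.mul_sum]
    congr 1
    rw [Finset.mul_sum]
    apply Finset.sum_congr rfl
    intro i _
    ring
  -- rpow computation
  have hrp : (f x ^ k : ℝ) ^ ((1 : ℝ) - 2 / (k : ℝ)) = f x ^ k / f x ^ 2 := by
    rw [← Real.rpow_natCast (f x) k, ← Real.rpow_mul (hfpos x).le]
    have h2r : (k:ℝ) * ((1:ℝ) - 2 / (k:ℝ)) = (k:ℝ) - 2 := by field_simp
    rw [h2r, Real.rpow_sub (hfpos x), Real.rpow_natCast]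
    norm_num
  -- cast of k-1
  have hcast : (((k-1:ℕ)):ℝ) = (k:ℝ) - 1 := by
    rw [Nat.cast_sub hk]; norm_num
  -- power identities
  have h1 : f x ^ (k-1) * f x = f x ^ k := by
    rw [← pow_succ, Nat.sub_add_cancel hk]
  have h2 : ((k:ℝ) - 1) * (f x ^ (k-1-1) * f x ^ 2) = ((k:ℝ) - 1) * f x ^ k := by
    match k, hk with
    | 1, _ => norm_num
    | (n+2), _ =>
      have hn : n + 2 - 1 - 1 = n := by omega
      rw [hn, ← pow_add]
  unfold driftLaplacian
  rw [hlap, hgrad, hrp, hcast, heq x]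
  rw [sub_eq_zero, ← mul_div_assoc, eq_div_iff (pow_ne_zero 2 hF)]
  linear_combination ((k:ℝ) * laplacian f x * f x
      - (k:ℝ) * (inner ℝ (gradient h x) (gradient f x) : ℝ) * f x) * h1
    + (k:ℝ) * ‖gradient f x‖^2 * h2
end

section
/- Let E be a finite-dimensional real inner product space of dimension n, let m > 0 and K ≥ 0 be real numbers, and let u, h : E → ℝ be smooth. Assume the m-Bakry–Émery condition (with flat background): Hess h(x)(w, w) − (1/m)·⟨∇h(x), w⟩² ≥ −K·‖w‖² for all x ∈ E and all w ∈ E. Then for all x ∈ E: (1/2)·Δ_h(‖∇u‖²)(x) ≥ (Δ_h u(x))²/(n+m) + ⟨∇u(x), ∇(Δ_h u)(x)⟩ − K·‖∇u(x)‖². -/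
open scoped BigOperators
open Module

set_option maxHeartbeats 1000000

variable {E : Type*} [NormedAddCommGroup E] [InnerProductSpace ℝ E] [FiniteDimensional ℝ E]

noncomputable def pd (v : E) (f : E → ℝ) : E → ℝ := fun x => fderiv ℝ f x v

theorem pd_def (v : E) (f : E → ℝ) : pd v f = fun x => fderiv ℝ f x v := rfl

theorem pd_contDiff {f : E → ℝ} (hf : ContDiff ℝ (⊤ : ℕ∞) f) (v : E) : ContDiff ℝ (⊤ : ℕ∞) (pd v f) :=
  (ContinuousLinearMap.apply ℝ ℝ v).contDiff.comp (hf.fderiv_right (by simp))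

theorem pd_comm {f : E → ℝ} (hf : ContDiff ℝ (⊤ : ℕ∞) f) (v w : E) (x : E) :
    pd v (pd w f) x = pd w (pd v f) x := by
  have h2 : ∀ (z v w : E), fderiv ℝ (fun y => fderiv ℝ f y w) z v = fderiv ℝ (fderiv ℝ f) z v w := by
    intro z v w
    rw [fderiv_clm_apply ((hf.fderiv_right (m := (⊤ : ℕ∞)) (by simp)).differentiable (by simp) z)
      (differentiableAt_const w)]
    simp
  have hsym : IsSymmSndFDerivAt ℝ f x := (hf.contDiffAt).isSymmSndFDerivAt (by rw [minSmoothness_of_isRCLikeNormedField]; exact WithTop.coe_le_coe.mpr (le_top : (2 : ℕ∞) ≤ ⊤))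
  simp only [pd_def]
  rw [h2 x v w, h2 x w v, hsym v w]

theorem pd_pd {f : E → ℝ} (hf : ContDiff ℝ (⊤ : ℕ∞) f) (v w x : E) :
    pd v (pd w f) x = fderiv ℝ (fderiv ℝ f) x v w := by
  simp only [pd_def]
  rw [fderiv_clm_apply ((hf.fderiv_right (m := (⊤ : ℕ∞)) (by simp)).differentiable (by simp) x)
      (differentiableAt_const w)]
  simp

theorem pd_sum {ι : Type*} (s : Finset ι) (F : ι → E → ℝ) (v x : E)
    (hF : ∀ i ∈ s, DifferentiableAt ℝ (F i) x) :
    pd v (fun y => ∑ i ∈ s, F i y) x = ∑ i ∈ s, pd v (F i) x := by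
  simp only [pd_def]
  rw [fderiv_fun_sum hF]
  simp

theorem pd_mul {F G : E → ℝ} (v x : E) (hF : DifferentiableAt ℝ F x)
    (hG : DifferentiableAt ℝ G x) :
    pd v (fun y => F y * G y) x = pd v F x * G x + F x * pd v G x := by
  simp only [pd_def]
  rw [fderiv_fun_mul hF hG]
  simp only [ContinuousLinearMap.add_apply, ContinuousLinearMap.smul_apply, smul_eq_mul]
  ring

theorem pd_sq {F : E → ℝ} (v x : E) (hF : DifferentiableAt ℝ F x) :
    pd v (fun y => F y ^ 2) x = 2 * F x * pd v F x := by
  have : (fun y => F y ^ 2) = fun y => F y * F y := by funext y; ring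
  rw [this, pd_mul v x hF hF]; ring

theorem pd_sub {F G : E → ℝ} (v x : E) (hF : DifferentiableAt ℝ F x)
    (hG : DifferentiableAt ℝ G x) :
    pd v (fun y => F y - G y) x = pd v F x - pd v G x := by
  simp only [pd_def]
  rw [fderiv_fun_sub hF hG]; simp

theorem pd_vec_sum {ι : Type*} (s : Finset ι) (c : ι → ℝ) (w : ι → E) (f : E → ℝ) (x : E) :
    pd (∑ i ∈ s, c i • w i) f x = ∑ i ∈ s, c i * pd (w i) f x := by
  simp only [pd_def]
  rw [map_sum]
  exact Finset.sum_congr rfl fun i _ => by simp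

theorem inner_gradient (f : E → ℝ) (x v : E) :
    (inner ℝ (gradient f x) v : ℝ) = pd v f x := by
  simp only [gradient, pd_def]
  exact InnerProductSpace.toDual_symm_apply

theorem grad_expand (f : E → ℝ) (x : E) :
    gradient f x = ∑ i, pd (stdOrthonormalBasis ℝ E i) f x • stdOrthonormalBasis ℝ E i := by
  conv_lhs => rw [← (stdOrthonormalBasis ℝ E).sum_repr' (gradient f x)]
  refine Finset.sum_congr rfl fun i _ => ?_
  rw [real_inner_comm, inner_gradient]

theorem inner_grad_grad (f g : E → ℝ) (x : E) :
    (inner ℝ (gradient f x) (gradient g x) : ℝ)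
      = ∑ i, pd (stdOrthonormalBasis ℝ E i) f x * pd (stdOrthonormalBasis ℝ E i) g x := by
  rw [← (stdOrthonormalBasis ℝ E).sum_inner_mul_inner (gradient f x) (gradient g x)]
  refine Finset.sum_congr rfl fun i _ => ?_
  rw [inner_gradient, real_inner_comm, inner_gradient]

theorem norm_sq_grad (f : E → ℝ) (x : E) :
    ‖gradient f x‖ ^ 2 = ∑ i, pd (stdOrthonormalBasis ℝ E i) f x ^ 2 := by
  rw [← real_inner_self_eq_norm_sq, inner_grad_grad]
  exact Finset.sum_congr rfl fun i _ => (sq _).symm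

theorem hess_eq {f : E → ℝ} (hf : ContDiff ℝ (⊤ : ℕ∞) f) (x v w : E) :
    hess f x v w = pd v (pd w f) x := by
  rw [hess, iteratedFDeriv_two_apply, pd_pd hf]
  simp

theorem laplacian_eq {f : E → ℝ} (hf : ContDiff ℝ (⊤ : ℕ∞) f) (x : E) :
    laplacian f x = ∑ i, pd (stdOrthonormalBasis ℝ E i) (pd (stdOrthonormalBasis ℝ E i) f) x := by
  refine Finset.sum_congr rfl fun i _ => ?_
  rw [iteratedFDeriv_two_apply, pd_pd hf]
  simp

theorem pd_const_mul {F : E → ℝ} (c : ℝ) (v x : E) (hF : DifferentiableAt ℝ F x) :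
    pd v (fun y => c * F y) x = c * pd v F x := by
  simp only [pd_def]
  rw [fderiv_const_mul hF]
  simp

theorem quad_helper (t s N M : ℝ) (hN : 0 < N) (hM : 0 < M) :
    (t - s) ^ 2 / (N + M) ≤ t ^ 2 / N + s ^ 2 / M := by
  rw [div_add_div _ _ (ne_of_gt hN) (ne_of_gt hM), div_le_div_iff₀ (by positivity) (by positivity)]
  nlinarith [sq_nonneg (N * s + M * t), sq_nonneg (t - s), sq_nonneg t, sq_nonneg s]

theorem stmt_4 (n : ℕ) (hn : finrank ℝ E = n) (m K : ℝ) (hm : 0 < m) (hK : 0 ≤ K)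
    (u h : E → ℝ) (hu : ContDiff ℝ (⊤ : ℕ∞) u) (hh : ContDiff ℝ (⊤ : ℕ∞) h)
    (hBE : ∀ x, ∀ w : E, hess h x w w - (1 / m) * (inner ℝ (gradient h x) w : ℝ) ^ 2
      ≥ -K * ‖w‖ ^ 2) :
    ∀ x, (1 / 2 : ℝ) * driftLaplacian h (fun y => ‖gradient u y‖ ^ 2) x
      ≥ (driftLaplacian h u x) ^ 2 / ((n : ℝ) + m)
        + (inner ℝ (gradient u x) (gradient (driftLaplacian h u) x) : ℝ)
        - K * ‖gradient u x‖ ^ 2 := by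
  subst hn
  intro x
  set B := stdOrthonormalBasis ℝ E with hB
  have hu1 : ∀ v : E, ContDiff ℝ (⊤ : ℕ∞) (pd v u) := fun v => pd_contDiff hu v
  have hu2 : ∀ v w : E, ContDiff ℝ (⊤ : ℕ∞) (pd v (pd w u)) := fun v w => pd_contDiff (hu1 w) v
  have hh1 : ∀ v : E, ContDiff ℝ (⊤ : ℕ∞) (pd v h) := fun v => pd_contDiff hh v
  -- the squared gradient norm as a sum of squares
  set Q : E → ℝ := fun y => ∑ i, pd (B i) u y ^ 2 with hQdef
  have hPQ : (fun y => ‖gradient u y‖ ^ 2) = Q := funext fun y => norm_sq_grad u y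
  have hQ : ContDiff ℝ (⊤ : ℕ∞) Q := ContDiff.sum fun i _ => (hu1 (B i)).pow 2
  -- symmetry facts
  have hsymA : ∀ i j, pd (B i) (pd (B j) u) x = pd (B j) (pd (B i) u) x :=
    fun i j => pd_comm hu _ _ x
  have hsymT : ∀ i j, pd (B j) (pd (B j) (pd (B i) u)) x
      = pd (B i) (pd (B j) (pd (B j) u)) x := by
    intro i j
    have h1 : pd (B j) (pd (B i) u) = pd (B i) (pd (B j) u) :=
      funext fun z => pd_comm hu _ _ z
    rw [h1]
    exact pd_comm (hu1 (B j)) _ _ x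
  -- first derivative of Q
  have hdQ : ∀ j, pd (B j) Q = fun z => ∑ i, 2 * (pd (B i) u z * pd (B j) (pd (B i) u) z) := by
    intro j
    funext z
    rw [hQdef, pd_sum Finset.univ _ _ _
      (fun i _ => (((hu1 (B i)).pow 2).differentiable (by simp) z))]
    refine Finset.sum_congr rfl fun i _ => ?_
    rw [pd_sq _ _ ((hu1 (B i)).differentiable (by simp) z)]
    ring
  -- Laplacian of Q
  have hC : laplacian Q x = ∑ j, ∑ i,
      (2 * pd (B j) (pd (B i) u) x ^ 2
        + 2 * (pd (B i) u x * pd (B j) (pd (B j) (pd (B i) u)) x)) := by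
    rw [laplacian_eq hQ]
    refine Finset.sum_congr rfl fun j _ => ?_
    rw [hdQ j, pd_sum Finset.univ _ _ _ (fun i _ =>
      ((contDiff_const.mul ((hu1 (B i)).mul (hu2 (B j) (B i)))).differentiable (by simp) x))]
    refine Finset.sum_congr rfl fun i _ => ?_
    rw [pd_const_mul 2 _ _ (((hu1 (B i)).mul (hu2 (B j) (B i))).differentiable (by simp) x),
      pd_mul _ _ ((hu1 (B i)).differentiable (by simp) x)
        ((hu2 (B j) (B i)).differentiable (by simp) x)]
    ring
  -- drift term of Q
  have hD : (inner ℝ (gradient h x) (gradient Q x) : ℝ)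
      = ∑ j, pd (B j) h x * ∑ i, 2 * (pd (B i) u x * pd (B j) (pd (B i) u) x) := by
    rw [inner_grad_grad h Q x]
    refine Finset.sum_congr rfl fun j _ => ?_
    rw [hdQ j]
  have hD2 : (∑ j, pd (B j) h x * ∑ i, 2 * (pd (B i) u x * pd (B j) (pd (B i) u) x))
      = ∑ i, ∑ j, 2 * (pd (B j) h x * (pd (B i) u x * pd (B i) (pd (B j) u) x)) := by
    simp only [Finset.mul_sum]
    rw [Finset.sum_comm]
    refine Finset.sum_congr rfl fun i _ => Finset.sum_congr rfl fun j _ => ?_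
    rw [hsymA i j]
    ring
  -- the drift Laplacian of u as an explicit function
  have hL : driftLaplacian h u = fun y => ∑ j,
      (pd (B j) (pd (B j) u) y - pd (B j) h y * pd (B j) u y) := by
    funext y
    rw [driftLaplacian, laplacian_eq hu, inner_grad_grad, ← Finset.sum_sub_distrib]
  have hval : driftLaplacian h u x
      = (∑ j, pd (B j) (pd (B j) u) x) - ∑ j, pd (B j) h x * pd (B j) u x := by
    rw [driftLaplacian, laplacian_eq hu, inner_grad_grad]
  -- the middle term
  have hE : (inner ℝ (gradient u x) (gradient (driftLaplacian h u) x) : ℝ)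
      = ∑ i, pd (B i) u x * ∑ j,
        (pd (B i) (pd (B j) (pd (B j) u)) x
          - (pd (B i) (pd (B j) h) x * pd (B j) u x + pd (B j) h x * pd (B i) (pd (B j) u) x)) := by
    rw [real_inner_comm, inner_gradient]
    conv_lhs => rw [grad_expand u x]
    rw [pd_vec_sum]
    refine Finset.sum_congr rfl fun i _ => ?_
    congr 1
    rw [hL, pd_sum Finset.univ _ _ _ (fun j _ =>
      ((hu2 (B j) (B j)).sub ((hh1 (B j)).mul (hu1 (B j)))).differentiable (by simp) x)]
    refine Finset.sum_congr rfl fun j _ => ?_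
    rw [pd_sub _ _ ((hu2 (B j) (B j)).differentiable (by simp) x)
      (((hh1 (B j)).mul (hu1 (B j))).differentiable (by simp) x),
      pd_mul _ _ ((hh1 (B j)).differentiable (by simp) x) ((hu1 (B j)).differentiable (by simp) x)]
  -- Hessian of h against the gradient of u
  have hhess : hess h x (gradient u x) (gradient u x)
      = ∑ i, ∑ j, pd (B i) u x * pd (B j) u x * pd (B i) (pd (B j) h) x := by
    rw [hess_eq hh, grad_expand u x, pd_vec_sum]
    refine Finset.sum_congr rfl fun i _ => ?_
    have hF : pd (∑ j, pd (B j) u x • B j) h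
        = fun z => ∑ j, pd (B j) u x * pd (B j) h z :=
      funext fun z => pd_vec_sum _ _ _ _ z
    rw [hF, pd_sum Finset.univ _ _ _ (fun j _ =>
      ((contDiff_const.mul (hh1 (B j))).differentiable (by simp) x)), Finset.mul_sum]
    refine Finset.sum_congr rfl fun j _ => ?_
    rw [pd_const_mul _ _ _ ((hh1 (B j)).differentiable (by simp) x)]
    ring
  -- the Bakry–Émery hypothesis at x in direction ∇u x
  have hBE' := hBE x (gradient u x)
  rw [hhess, inner_grad_grad h u x, norm_sq_grad u x] at hBE'
  simp only [← hB] at hBE'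
  -- key algebraic identity
  have key1 : (1 / 2 : ℝ) * driftLaplacian h Q x
      - (∑ i, pd (B i) u x * ∑ j,
        (pd (B i) (pd (B j) (pd (B j) u)) x
          - (pd (B i) (pd (B j) h) x * pd (B j) u x + pd (B j) h x * pd (B i) (pd (B j) u) x)))
      = (∑ i, ∑ j, pd (B i) (pd (B j) u) x ^ 2)
        + ∑ i, ∑ j, pd (B i) u x * pd (B j) u x * pd (B i) (pd (B j) h) x := by
    rw [driftLaplacian, hC, hD, hD2]
    rw [Finset.sum_comm (f := fun j i =>
      (2 * pd (B j) (pd (B i) u) x ^ 2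
        + 2 * (pd (B i) u x * pd (B j) (pd (B j) (pd (B i) u)) x)))]
    simp only [Finset.mul_sum, ← Finset.sum_sub_distrib, ← Finset.sum_add_distrib]
    refine Finset.sum_congr rfl fun i _ => Finset.sum_congr rfl fun j _ => ?_
    rw [hsymT i j, hsymA j i]
    ring
  -- diagonal Cauchy–Schwarz
  have hS2 : (∑ i, pd (B i) (pd (B i) u) x ^ 2)
      ≤ ∑ i, ∑ j, pd (B i) (pd (B j) u) x ^ 2 :=
    Finset.sum_le_sum fun i _ =>
      Finset.single_le_sum (f := fun j => pd (B i) (pd (B j) u) x ^ 2)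
        (fun j _ => sq_nonneg _) (Finset.mem_univ i)
  have hS1 : (∑ i, pd (B i) (pd (B i) u) x) ^ 2
      ≤ (finrank ℝ E : ℝ) * ∑ i, pd (B i) (pd (B i) u) x ^ 2 := by
    simpa using sq_sum_le_card_mul_sum_sq
      (s := (Finset.univ : Finset (Fin (finrank ℝ E))))
      (f := fun i => pd (B i) (pd (B i) u) x)
  -- second-order inequality
  have hQuad : (( ∑ j, pd (B j) (pd (B j) u) x) - ∑ j, pd (B j) h x * pd (B j) u x) ^ 2
        / ((finrank ℝ E : ℝ) + m)
      ≤ (∑ i, ∑ j, pd (B i) (pd (B j) u) x ^ 2)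
        + (1 / m) * (∑ j, pd (B j) h x * pd (B j) u x) ^ 2 := by
    rcases Nat.eq_zero_or_pos (finrank ℝ E) with h0 | hpos
    · haveI : IsEmpty (Fin (finrank ℝ E)) := by rw [h0]; infer_instance
      simp only [Finset.univ_eq_empty, Finset.sum_empty]
      norm_num
    · have hNpos : (0 : ℝ) < (finrank ℝ E : ℝ) := by exact_mod_cast hpos
      calc ((∑ j, pd (B j) (pd (B j) u) x) - ∑ j, pd (B j) h x * pd (B j) u x) ^ 2
            / ((finrank ℝ E : ℝ) + m)
          ≤ (∑ j, pd (B j) (pd (B j) u) x) ^ 2 / (finrank ℝ E : ℝ)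
            + (∑ j, pd (B j) h x * pd (B j) u x) ^ 2 / m := quad_helper _ _ _ _ hNpos hm
        _ ≤ (∑ i, ∑ j, pd (B i) (pd (B j) u) x ^ 2)
            + (1 / m) * (∑ j, pd (B j) h x * pd (B j) u x) ^ 2 := by
            have : (∑ j, pd (B j) (pd (B j) u) x) ^ 2 / (finrank ℝ E : ℝ)
                ≤ ∑ i, pd (B i) (pd (B i) u) x ^ 2 := by
              rw [div_le_iff₀ hNpos]
              calc (∑ j, pd (B j) (pd (B j) u) x) ^ 2
                  ≤ (finrank ℝ E : ℝ) * ∑ i, pd (B i) (pd (B i) u) x ^ 2 := hS1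
                _ = (∑ i, pd (B i) (pd (B i) u) x ^ 2) * (finrank ℝ E : ℝ) := by ring
            have h2 := hS2
            rw [one_div, inv_mul_eq_div]
            linarith
  -- put everything together
  rw [hPQ, hval, hE, norm_sq_grad u x]
  simp only [← hB]
  linarith [key1, hBE', hQuad]
end
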